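/- arXiv:2605.11291 — 7 statements merged into one kernel-verified Lean document; each statement's English description precedes it below -/
import Mathlib

section
/- Let k ≥ 1 and let α₀, α₁, …, α_k be strictly positive real numbers. Then the generalized log-sum-exponential function ψ : ℝ^k → ℝ defined by ψ(t₁,…,t_k) = log(α₀ + ∑_{i=1}^k αᵢ e^{t_i}) is strictly convex on ℝ^k. -/
/-!
Put `Xᵢ = xᵢ + log wᵢ - log ∑ⱼ wⱼ e^{xⱼ}`, so that `∑ e^{Xᵢ} = 1`, and likewise `Y` for `y`.
Strict convexity of `exp` at a coordinate where `X` and `Y` differ gives `∑ e^{a Xᵢ + b Yᵢ} < 1`,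
which unwinds to strict convexity of `log ∑ wᵢ e^{xᵢ}` along every non-constant direction `x - y`.
The constant term `α₀` is the weight of an extra coordinate pinned at `0`, so `u ≠ v` always
yields a non-constant direction.
-/

open Real Finset

section LogSumExp

variable {ι : Type*} [Fintype ι]

lemma sum_exp_convex_combo_lt {X Y : ι → ℝ} {i₀ : ι} (h : X i₀ ≠ Y i₀) {a b : ℝ}
    (ha : 0 < a) (hb : 0 < b) (hab : a + b = 1) :
    ∑ i, exp (a * X i + b * Y i) < a * ∑ i, exp (X i) + b * ∑ i, exp (Y i) := by
  rw [mul_sum, mul_sum, ← sum_add_distrib]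
  refine sum_lt_sum (fun i _ => ?_) ⟨i₀, mem_univ _, ?_⟩
  · simpa using convexOn_exp.2 (Set.mem_univ (X i)) (Set.mem_univ (Y i)) ha.le hb.le hab
  · simpa using strictConvexOn_exp.2 (Set.mem_univ _) (Set.mem_univ _) h ha hb hab

lemma exp_add_log_sub {w : ℝ} (hw : 0 < w) (z c : ℝ) :
    exp (z + log w - c) = w * exp z / exp c := by
  rw [exp_sub, exp_add, exp_log hw, mul_comm]

lemma sum_mul_exp_pos [Nonempty ι] {w : ι → ℝ} (hw : ∀ i, 0 < w i) (x : ι → ℝ) :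
    0 < ∑ i, w i * exp (x i) :=
  sum_pos (fun i _ => mul_pos (hw i) (exp_pos _)) univ_nonempty

lemma sum_exp_add_log_sub_log_sum [Nonempty ι] {w : ι → ℝ} (hw : ∀ i, 0 < w i) (x : ι → ℝ) :
    ∑ i, exp (x i + log (w i) - log (∑ j, w j * exp (x j))) = 1 := by
  simp_rw [exp_add_log_sub (hw _), ← sum_div, exp_log (sum_mul_exp_pos hw x)]
  exact div_self (sum_mul_exp_pos hw x).ne'

theorem log_sum_mul_exp_convex_combo_lt {w x y : ι → ℝ} (hw : ∀ i, 0 < w i) {i j : ι}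
    (hxy : x i - y i ≠ x j - y j) {a b : ℝ} (ha : 0 < a) (hb : 0 < b) (hab : a + b = 1) :
    log (∑ i, w i * exp (a * x i + b * y i)) <
      a * log (∑ i, w i * exp (x i)) + b * log (∑ i, w i * exp (y i)) := by
  have : Nonempty ι := ⟨i⟩
  set Lx := log (∑ i, w i * exp (x i))
  set Ly := log (∑ i, w i * exp (y i))
  obtain ⟨i₀, hi₀⟩ : ∃ i₀, x i₀ + log (w i₀) - Lx ≠ y i₀ + log (w i₀) - Ly := by
    by_contra! h
    exact hxy (by linarith [h i, h j])
  have hlt := sum_exp_convex_combo_lt (X := fun i => x i + log (w i) - Lx)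
    (Y := fun i => y i + log (w i) - Ly) hi₀ ha hb hab
  rw [sum_exp_add_log_sub_log_sum hw x, sum_exp_add_log_sub_log_sum hw y] at hlt
  have hcombo : ∀ i, a * (x i + log (w i) - Lx) + b * (y i + log (w i) - Ly) =
      (a * x i + b * y i) + log (w i) - (a * Lx + b * Ly) := fun i => by
    linear_combination log (w i) * hab
  simp_rw [hcombo, exp_add_log_sub (hw _), ← sum_div, div_lt_iff₀ (exp_pos _), mul_one, hab,
    one_mul] at hlt
  exact (log_lt_iff_lt_exp (sum_mul_exp_pos hw _)).2 hlt

end LogSumExp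

theorem stmt0_general (k : ℕ) (α₀ : ℝ) (α : Fin k → ℝ)
    (hα₀ : 0 < α₀) (hα : ∀ i, 0 < α i) :
    StrictConvexOn ℝ Set.univ
      (fun t : Fin k → ℝ => Real.log (α₀ + ∑ i, α i * Real.exp (t i))) := by
  set w : Fin (k + 1) → ℝ := Fin.cons α₀ α
  have hw : ∀ j, 0 < w j := Fin.cases hα₀ hα
  have hψ : ∀ t : Fin k → ℝ,
      α₀ + ∑ i, α i * exp (t i) = ∑ j, w j * exp ((Fin.cons 0 t : Fin (k + 1) → ℝ) j) := by
    intro t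
    simp [w, Fin.sum_univ_succ]
  refine ⟨convex_univ, fun u _ v _ huv a b ha hb hab => ?_⟩
  obtain ⟨i, hi⟩ := Function.ne_iff.1 huv
  have hcons : (Fin.cons 0 (a • u + b • v) : Fin (k + 1) → ℝ) =
      fun j => a * (Fin.cons 0 u : Fin (k + 1) → ℝ) j + b * (Fin.cons 0 v : Fin (k + 1) → ℝ) j := by
    ext j
    cases j using Fin.cases <;> simp
  simp only [smul_eq_mul, hψ, hcons]
  exact log_sum_mul_exp_convex_combo_lt hw (i := i.succ) (j := 0) (by simpa [sub_eq_zero])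
    ha hb hab

/-- For `k ≥ 1` and strictly positive reals `α₀, α₁, …, α_k`, the generalized
log-sum-exponential function `ψ(t₁,…,t_k) = log(α₀ + ∑ᵢ αᵢ e^{tᵢ})` is strictly convex on `ℝ^k`. -/
theorem stmt0 (k : ℕ) (hk : 1 ≤ k) (α₀ : ℝ) (α : Fin k → ℝ)
    (hα₀ : 0 < α₀) (hα : ∀ i, 0 < α i) :
    StrictConvexOn ℝ Set.univ
      (fun t : Fin k → ℝ => Real.log (α₀ + ∑ i, α i * Real.exp (t i))) :=
  stmt0_general k α₀ α hα₀ hα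
end

section
/- Let (Ω, 𝔽, P) be a probability space, d ≥ 1, and let u, v : Ω → ℝ^d be random vectors that are independent and identically distributed. If the inner product ⟨u, v⟩ = 0 almost surely, then u = 0 almost surely (and hence v = 0 almost surely). -/
/-!
Let `μ` be the common law of `u` and `v`. By independence, `μ`-almost every `x` is orthogonal to
`μ`-almost every `y`. If `μ` is carried by a subspace `W` but is not concentrated at `0`, pick
such a nonzero `x₀ ∈ W`: then `μ` is carried by `W ⊓ x₀ᗮ`, a subspace of smaller dimension.
Descending on the dimension from the whole space forces `μ = δ₀`.
-/

open MeasureTheory ProbabilityTheory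

section InnerProductSpace

variable {E : Type*} [NormedAddCommGroup E] [InnerProductSpace ℝ E] [MeasurableSpace E]
  {μ : Measure E}

theorem ae_eq_zero_of_ae_mem_of_ae_ae_inner_eq_zero
    (h : ∀ᵐ x ∂μ, ∀ᵐ y ∂μ, inner ℝ x y = (0 : ℝ))
    (W : Submodule ℝ E) [FiniteDimensional ℝ W] (hW : ∀ᵐ x ∂μ, x ∈ W) : ∀ᵐ x ∂μ, x = 0 := by
  induction hWn : Module.finrank ℝ W using Nat.strong_induction_on generalizing W with
  | _ n ih =>
    by_contra hne
    obtain ⟨x₀, hx₀, hx₀W, hx₀orth⟩ :=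
      ((Filter.not_eventually.mp hne).and_eventually (hW.and h)).exists
    have hlt : W ⊓ (ℝ ∙ x₀)ᗮ < W := by
      refine inf_le_left.lt_of_ne fun hEq ↦ hx₀ ?_
      have : x₀ ∈ W ⊓ (ℝ ∙ x₀)ᗮ := by rwa [hEq]
      exact inner_self_eq_zero.mp (Submodule.mem_orthogonal_singleton_iff_inner_right.mp this.2)
    refine hne <| ih _ (hWn ▸ Submodule.finrank_lt_finrank_of_lt hlt) _ ?_ rfl
    filter_upwards [hW, hx₀orth] with y hyW hy
    exact ⟨hyW, Submodule.mem_orthogonal_singleton_iff_inner_right.mpr hy⟩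

theorem ae_eq_zero_of_ae_ae_inner_eq_zero [FiniteDimensional ℝ E]
    (h : ∀ᵐ x ∂μ, ∀ᵐ y ∂μ, inner ℝ x y = (0 : ℝ)) : ∀ᵐ x ∂μ, x = 0 :=
  ae_eq_zero_of_ae_mem_of_ae_ae_inner_eq_zero h ⊤ (.of_forall fun _ ↦ Submodule.mem_top)

end InnerProductSpace

theorem ProbabilityTheory.IndepFun.ae_ae_map_of_ae {Ω α β : Type*} [MeasurableSpace Ω]
    [MeasurableSpace α] [MeasurableSpace β] {P : Measure Ω} [IsFiniteMeasure P]
    {u : Ω → α} {v : Ω → β} (hu : Measurable u) (hv : Measurable v) (hindep : IndepFun u v P)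
    {p : α → β → Prop} (hp : MeasurableSet {z : α × β | p z.1 z.2})
    (h : ∀ᵐ ω ∂P, p (u ω) (v ω)) :
    ∀ᵐ x ∂(P.map u), ∀ᵐ y ∂(P.map v), p x y := by
  refine Measure.ae_ae_of_ae_prod (p := fun z ↦ p z.1 z.2) ?_
  rw [← (indepFun_iff_map_prod_eq_prod_map_map hu.aemeasurable hv.aemeasurable).mp hindep]
  exact (ae_map_iff (hu.prodMk hv).aemeasurable hp).mpr h

theorem stmt1_general {Ω : Type*} [MeasurableSpace Ω] (P : Measure Ω) [IsProbabilityMeasure P]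
    (d : ℕ)
    (u v : Ω → EuclideanSpace ℝ (Fin d))
    (hu : Measurable u) (hv : Measurable v)
    (hindep : IndepFun u v P)
    (hid : Measure.map u P = Measure.map v P)
    (h0 : ∀ᵐ ω ∂P, (inner ℝ (u ω) (v ω) : ℝ) = 0) :
    (∀ᵐ ω ∂P, u ω = 0) ∧ (∀ᵐ ω ∂P, v ω = 0) := by
  have hinner : MeasurableSet
      {z : EuclideanSpace ℝ (Fin d) × EuclideanSpace ℝ (Fin d) | inner ℝ z.1 z.2 = (0 : ℝ)} :=
    measurableSet_eq_fun (by fun_prop) measurable_const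
  have hlaw : ∀ᵐ x ∂(P.map v), x = 0 := by
    refine ae_eq_zero_of_ae_ae_inner_eq_zero ?_
    simpa only [hid] using hindep.ae_ae_map_of_ae hu hv hinner h0
  have hzero := measurableSet_singleton (0 : EuclideanSpace ℝ (Fin d))
  exact ⟨(ae_map_iff hu.aemeasurable hzero).mp (hid ▸ hlaw),
    (ae_map_iff hv.aemeasurable hzero).mp hlaw⟩

/-- If `u, v : Ω → ℝ^d` are i.i.d. random vectors on a probability space and
`⟨u, v⟩ = 0` almost surely, then `u = 0` almost surely (and hence `v = 0` almost surely). -/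
theorem stmt1 {Ω : Type*} [MeasurableSpace Ω] (P : Measure Ω) [IsProbabilityMeasure P]
    (d : ℕ) (hd : 1 ≤ d)
    (u v : Ω → EuclideanSpace ℝ (Fin d))
    (hu : Measurable u) (hv : Measurable v)
    (hindep : IndepFun u v P)
    (hid : Measure.map u P = Measure.map v P)
    (h0 : ∀ᵐ ω ∂P, (inner ℝ (u ω) (v ω) : ℝ) = 0) :
    (∀ᵐ ω ∂P, u ω = 0) ∧ (∀ᵐ ω ∂P, v ω = 0) :=
  stmt1_general P d u v hu hv hindep hid h0
end

section
/- Let k, d, C ≥ 1, let λ₁,…,λ_C ∈ (0,1) with ∑_{i=1}^C λᵢ = 1, and let ψ : ℝ^k → ℝ be argument-wise strictly increasing. Let M ∈ ℝ^{d×C} have columns μ₁,…,μ_C, each of unit Euclidean norm and with all entries nonnegative. Then S(MᵀM) ≥ S(I_C), where I_C is the C×C identity matrix, with equality if and only if the columns μ₁,…,μ_C are pairwise orthogonal (i.e., orthonormal). In particular, if d < C the inequality is strict, since C orthonormal vectors in ℝ^d require d ≥ C. -/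
/-!
Since `ψ` is increasing in every argument, `S` is entrywise increasing in its matrix argument,
and strictly so as soon as one entry increases strictly (the term `i = i₀`, `j₁ = ⋯ = j_k = j₀`
then increases strictly and has positive weight). For nonnegative unit columns the Gram matrix
`MᵀM` has unit diagonal and nonnegative entries, so it dominates `I_C` entrywise; equality of the
`S`-values therefore forces `MᵀM = I_C`, i.e. orthonormal columns, which is impossible when
`d < C` because `rank (MᵀM) ≤ d`.
-/

open Matrix

/-- `ψ : ℝ^k → ℝ` is argument-wise strictly increasing: strictly increasing in each coordinate
when the other coordinates are held fixed. -/
def ArgwiseStrictMono {k : ℕ} (ψ : (Fin k → ℝ) → ℝ) : Prop :=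
  ∀ (i : Fin k) (t : Fin k → ℝ) (s s' : ℝ), s < s' →
    ψ (Function.update t i s) < ψ (Function.update t i s')

/-- `S(A) = ∑_{i, j₁,…,j_k} (λᵢ ∏ₜ λ_{jₜ}) ψ(A_{i j₁} − 1, …, A_{i j_k} − 1)`. -/
noncomputable def S {k C : ℕ} (ψ : (Fin k → ℝ) → ℝ) (lam : Fin C → ℝ)
    (A : Matrix (Fin C) (Fin C) ℝ) : ℝ :=
  ∑ i : Fin C, ∑ j : Fin k → Fin C,
    (lam i * ∏ t, lam (j t)) * ψ (fun t => A i (j t) - 1)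

namespace ArgwiseStrictMono

variable {k : ℕ} {ψ : (Fin k → ℝ) → ℝ}

theorem monotone (hψ : ArgwiseStrictMono ψ) : Monotone ψ := by
  intro a b hab
  classical
  have step : ∀ s : Finset (Fin k), ψ a ≤ ψ (s.piecewise b a) := by
    intro s
    induction s using Finset.induction with
    | empty => simp
    | @insert t s hts ih =>
      have hskip : Function.update (s.piecewise b a) t (a t) = s.piecewise b a := by
        rw [← Finset.piecewise_eq_of_notMem s b a hts, Function.update_eq_self]
      rw [Finset.piecewise_insert]
      calc ψ a ≤ ψ (s.piecewise b a) := ih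
        _ = ψ (Function.update (s.piecewise b a) t (a t)) := by rw [hskip]
        _ ≤ ψ (Function.update (s.piecewise b a) t (b t)) :=
          StrictMono.monotone (hψ t (s.piecewise b a)) (hab t)
  simpa using step Finset.univ

theorem strictMono (hψ : ArgwiseStrictMono ψ) : StrictMono ψ := by
  intro a b hab
  obtain ⟨hle, t, hlt⟩ := Pi.lt_def.mp hab
  calc ψ a = ψ (Function.update a t (a t)) := by rw [Function.update_eq_self]
    _ < ψ (Function.update a t (b t)) := hψ t a _ _ hlt
    _ ≤ ψ b := hψ.monotone fun s => by
      rcases eq_or_ne s t with rfl | hs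
      · simp
      · simpa [Function.update_of_ne hs] using hle s

end ArgwiseStrictMono

section S

variable {k C : ℕ} {ψ : (Fin k → ℝ) → ℝ} {lam : Fin C → ℝ} {A B : Matrix (Fin C) (Fin C) ℝ}

theorem S_le_S (hψ : Monotone ψ) (hlam : ∀ i, 0 ≤ lam i) (hAB : ∀ i j, A i j ≤ B i j) :
    S ψ lam A ≤ S ψ lam B := by
  unfold S
  gcongr with i _ j _
  · exact mul_nonneg (hlam i) (Finset.prod_nonneg fun t _ => hlam (j t))
  · exact hψ fun t => sub_le_sub_right (hAB i (j t)) 1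

theorem S_lt_S (hk : 0 < k) (hψ : StrictMono ψ) (hlam : ∀ i, 0 < lam i)
    (hAB : ∀ i j, A i j ≤ B i j) {i₀ j₀ : Fin C} (hlt : A i₀ j₀ < B i₀ j₀) :
    S ψ lam A < S ψ lam B := by
  have hweight : ∀ i (j : Fin k → Fin C), 0 < lam i * ∏ t, lam (j t) :=
    fun i j => mul_pos (hlam i) (Finset.prod_pos fun t _ => hlam (j t))
  have hterm : ∀ i (j : Fin k → Fin C),
      (lam i * ∏ t, lam (j t)) * ψ (fun t => A i (j t) - 1) ≤
        (lam i * ∏ t, lam (j t)) * ψ (fun t => B i (j t) - 1) := fun i j =>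
    mul_le_mul_of_nonneg_left (hψ.monotone fun t => sub_le_sub_right (hAB i (j t)) 1)
      (hweight i j).le
  have hdiag : (fun _ : Fin k => A i₀ j₀ - 1) < fun _ => B i₀ j₀ - 1 :=
    Pi.lt_def.mpr ⟨fun _ => sub_le_sub_right hlt.le 1, ⟨0, hk⟩, sub_lt_sub_right hlt 1⟩
  exact Finset.sum_lt_sum (fun i _ => Finset.sum_le_sum fun j _ => hterm i j)
    ⟨i₀, Finset.mem_univ _, Finset.sum_lt_sum (fun j _ => hterm i₀ j)
      ⟨fun _ => j₀, Finset.mem_univ _, mul_lt_mul_of_pos_left (hψ hdiag) (hweight _ _)⟩⟩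

theorem S_eq_S_iff (hk : 0 < k) (hψ : StrictMono ψ) (hlam : ∀ i, 0 < lam i)
    (hAB : ∀ i j, A i j ≤ B i j) : S ψ lam A = S ψ lam B ↔ A = B := by
  refine ⟨fun hS => ?_, fun h => h ▸ rfl⟩
  by_contra hne
  obtain ⟨i₀, j₀, hij⟩ : ∃ i j, A i j ≠ B i j := by
    by_contra! h
    exact hne (Matrix.ext h)
  exact (S_lt_S hk hψ hlam hAB (lt_of_le_of_ne (hAB i₀ j₀) hij)).ne hS

end S

section Gram

variable {m n R : Type*} [Fintype m] [DecidableEq n]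

theorem one_apply_le_transpose_mul_self_apply [CommSemiring R] [PartialOrder R]
    [IsOrderedRing R] {M : Matrix m n R} (hcols : ∀ j, ∑ i, M i j ^ 2 = 1)
    (hnonneg : ∀ i j, 0 ≤ M i j) (j j' : n) : (1 : Matrix n n R) j j' ≤ (Mᵀ * M) j j' := by
  rw [mul_apply]
  rcases eq_or_ne j j' with rfl | hne
  · simp [← sq, hcols]
  · rw [one_apply_ne hne]
    exact Finset.sum_nonneg fun i _ => mul_nonneg (hnonneg i j) (hnonneg i j')

theorem transpose_mul_self_eq_one_iff [CommSemiring R] {M : Matrix m n R}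
    (hcols : ∀ j, ∑ i, M i j ^ 2 = 1) :
    Mᵀ * M = 1 ↔ ∀ j j', j ≠ j' → ∑ i, M i j * M i j' = 0 := by
  refine ⟨fun h j j' hne => ?_, fun h => Matrix.ext fun j j' => ?_⟩
  · simpa [mul_apply, one_apply_ne hne] using congrFun (congrFun h j) j'
  · rw [mul_apply]
    rcases eq_or_ne j j' with rfl | hne
    · simp [← sq, hcols]
    · simpa [one_apply_ne hne] using h j j' hne

theorem transpose_mul_self_ne_one_of_card_lt [Fintype n] [CommRing R] [Nontrivial R]
    (M : Matrix m n R) (hcard : Fintype.card m < Fintype.card n) : Mᵀ * M ≠ 1 := by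
  intro h
  have hrank := (rank_mul_le_right Mᵀ M).trans M.rank_le_card_height
  rw [h, rank_one] at hrank
  omega

end Gram

theorem stmt3_general (k d C : ℕ) (hk : 1 ≤ k)
    (lam : Fin C → ℝ) (hlam : ∀ i, lam i ∈ Set.Ioo (0 : ℝ) 1)
    (ψ : (Fin k → ℝ) → ℝ) (hψ : ArgwiseStrictMono ψ)
    (M : Matrix (Fin d) (Fin C) ℝ)
    (hcols : ∀ j, ∑ i, (M i j) ^ 2 = 1)
    (hnonneg : ∀ i j, 0 ≤ M i j) :
    S ψ lam (1 : Matrix (Fin C) (Fin C) ℝ) ≤ S ψ lam (Mᵀ * M) ∧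
    (S ψ lam (Mᵀ * M) = S ψ lam (1 : Matrix (Fin C) (Fin C) ℝ) ↔
      ∀ j j' : Fin C, j ≠ j' → ∑ i, M i j * M i j' = 0) ∧
    (d < C → S ψ lam (1 : Matrix (Fin C) (Fin C) ℝ) < S ψ lam (Mᵀ * M)) := by
  have hlam₀ : ∀ i, 0 < lam i := fun i => (hlam i).1
  have hdom := one_apply_le_transpose_mul_self_apply hcols hnonneg
  have hle : S ψ lam 1 ≤ S ψ lam (Mᵀ * M) := S_le_S hψ.monotone (fun i => (hlam₀ i).le) hdom
  have heq : S ψ lam (Mᵀ * M) = S ψ lam 1 ↔ Mᵀ * M = 1 := by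
    rw [eq_comm, eq_comm (a := Mᵀ * M)]
    exact S_eq_S_iff hk hψ.strictMono hlam₀ hdom
  refine ⟨hle, heq.trans (transpose_mul_self_eq_one_iff hcols), fun hdC => hle.lt_of_ne ?_⟩
  refine fun h => transpose_mul_self_ne_one_of_card_lt M ?_ (heq.mp h.symm)
  simpa using hdC

/-- For `M` with unit-norm nonnegative columns, `S(MᵀM) ≥ S(I_C)`, with equality
iff the columns are pairwise orthogonal; and the inequality is strict whenever `d < C`. -/
theorem stmt3 (k d C : ℕ) (hk : 1 ≤ k) (hd : 1 ≤ d) (hC : 1 ≤ C)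
    (lam : Fin C → ℝ) (hlam : ∀ i, lam i ∈ Set.Ioo (0 : ℝ) 1) (hsum : ∑ i, lam i = 1)
    (ψ : (Fin k → ℝ) → ℝ) (hψ : ArgwiseStrictMono ψ)
    (M : Matrix (Fin d) (Fin C) ℝ)
    (hcols : ∀ j, ∑ i, (M i j) ^ 2 = 1)
    (hnonneg : ∀ i j, 0 ≤ M i j) :
    S ψ lam (1 : Matrix (Fin C) (Fin C) ℝ) ≤ S ψ lam (Mᵀ * M) ∧
    (S ψ lam (Mᵀ * M) = S ψ lam (1 : Matrix (Fin C) (Fin C) ℝ) ↔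
      ∀ j j' : Fin C, j ≠ j' → ∑ i, M i j * M i j' = 0) ∧
    (d < C → S ψ lam (1 : Matrix (Fin C) (Fin C) ℝ) < S ψ lam (Mᵀ * M)) :=
  stmt3_general k d C hk lam hlam ψ hψ M hcols hnonneg
end

section
/- Let k ≥ 1, C ≥ 2, λ₁,…,λ_C ∈ (0,1) with ∑_{i=1}^C λᵢ = 1, and let ψ : ℝ^k → ℝ be strictly convex and argument-wise strictly increasing. Then: (i) 𝒜* is a convex and compact subset of ℝ^{C×C}; (ii) S is strictly convex on 𝒜*; (iii) S attains its minimum over 𝒜* at a unique matrix A* ∈ 𝒜*. -/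
/-
The constraints defining `𝒜*` are closed, convex and force `|A i j| ≤ 1` (from the `2 × 2`
principal minors), so `𝒜*` is a compact convex set. The function `S` is a positively weighted
sum of `ψ` composed with the affine maps `A ↦ (A i (j t) - 1)ₜ`; these maps jointly separate
matrices (take `j` constant), so strict convexity of `ψ` passes to `S`. A continuous strictly
convex function attains its minimum on a nonempty compact convex set at exactly one point.
-/

open Matrix

/-- `𝒜*` : real symmetric PSD `C×C` matrices with unit diagonal. -/
def AstarSet (C : ℕ) : Set (Matrix (Fin C) (Fin C) ℝ) :=
  {A | A.PosSemidef ∧ ∀ i, A i i = 1}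

theorem Matrix.PosSemidef.two_mul_abs_apply_le {n : Type*} [Fintype n] [DecidableEq n]
    {A : Matrix n n ℝ} (hA : A.PosSemidef) (i j : n) : 2 * |A i j| ≤ A i i + A j j := by
  have hsymm : A j i = A i j := by simpa using hA.1.apply i j
  have hquad : ∀ s : ℝ, 0 ≤ A i i + 2 * s * A i j + s ^ 2 * A j j := fun s => by
    have h := hA.dotProduct_mulVec_nonneg (Pi.single i 1 + Pi.single j s)
    simp only [star_trivial, mulVec_add, dotProduct_add, add_dotProduct, mulVec_single,
      single_dotProduct, Pi.smul_apply, col_apply, op_smul_eq_mul, hsymm] at h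
    linarith
  rw [abs_eq_max_neg, mul_max_of_nonneg _ _ zero_le_two, max_le_iff]
  constructor <;> nlinarith [hquad 1, hquad (-1)]

theorem Matrix.isClosed_setOf_posSemidef {n R : Type*} [Fintype n] [CommRing R] [PartialOrder R]
    [StarRing R] [TopologicalSpace R] [IsTopologicalRing R] [ContinuousStar R]
    [OrderClosedTopology R] :
    IsClosed {A : Matrix n n R | A.PosSemidef} := by
  simp only [posSemidef_iff_dotProduct_mulVec, Set.ofPred_and, Set.ofPred_forall]
  refine (isClosed_eq continuous_id.matrix_conjTranspose continuous_id).inter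
    (isClosed_iInter fun x => isClosed_le continuous_const ?_)
  exact continuous_const.dotProduct (continuous_id.matrix_mulVec continuous_const)

theorem StrictConvexOn.sum_mul_comp_affineMap {ι E F : Type*} [Fintype ι] [AddCommGroup E]
    [Module ℝ E] [AddCommGroup F] [Module ℝ F] {s : Set E} (hs : Convex ℝ s) {f : F → ℝ}
    (hf : StrictConvexOn ℝ Set.univ f) {w : ι → ℝ} (hw : ∀ p, 0 < w p) (L : ι → E →ᵃ[ℝ] F)
    (hL : ∀ x y, x ≠ y → ∃ p, L p x ≠ L p y) :
    StrictConvexOn ℝ s fun x => ∑ p, w p * f (L p x) := by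
  refine ⟨hs, fun x _ y _ hxy a b ha hb hab => ?_⟩
  obtain ⟨p₀, hp₀⟩ := hL x y hxy
  simp only [smul_eq_mul, Finset.mul_sum, ← Finset.sum_add_distrib, Convex.combo_affine_apply hab]
  refine Finset.sum_lt_sum (fun p _ => ?_) ⟨p₀, Finset.mem_univ _, ?_⟩
  · have := hf.convexOn.2 (Set.mem_univ (L p x)) (Set.mem_univ (L p y)) ha.le hb.le hab
    rw [smul_eq_mul, smul_eq_mul] at this
    nlinarith [hw p]
  · have := hf.2 (Set.mem_univ (L p₀ x)) (Set.mem_univ (L p₀ y)) hp₀ ha hb hab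
    rw [smul_eq_mul, smul_eq_mul] at this
    nlinarith [hw p₀]

theorem StrictConvexOn.existsUnique_isMinOn {E : Type*} [AddCommGroup E] [Module ℝ E]
    [TopologicalSpace E] {s : Set E} {f : E → ℝ} (hf : StrictConvexOn ℝ s f) (hs : IsCompact s)
    (hne : s.Nonempty) (hcont : ContinuousOn f s) : ∃! x, x ∈ s ∧ IsMinOn f s x := by
  obtain ⟨x, hx, hmin⟩ := hs.exists_isMinOn hne hcont
  exact ⟨x, ⟨hx, hmin⟩, fun y ⟨hy, hymin⟩ => hf.eq_of_isMinOn hymin hmin hy hx⟩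

section AstarSet

variable (C : ℕ)

theorem convex_AstarSet : Convex ℝ (AstarSet C) := by
  rintro A ⟨hA, hAd⟩ B ⟨hB, hBd⟩ a b ha hb hab
  exact ⟨(hA.smul ha).add (hB.smul hb), fun i => by simp [hAd i, hBd i, hab]⟩

theorem isClosed_AstarSet : IsClosed (AstarSet C) := by
  have : AstarSet C = {A | A.PosSemidef} ∩ ⋂ i, {A | A i i = 1} := by
    ext A
    simp [AstarSet]
  rw [this]
  exact isClosed_setOf_posSemidef.inter
    (isClosed_iInter fun i => isClosed_eq (continuous_id.matrix_elem i i) continuous_const)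

theorem isCompact_AstarSet : IsCompact (AstarSet C) := by
  refine (isCompact_univ_pi fun _ => isCompact_univ_pi fun _ =>
    isCompact_Icc (a := (-1 : ℝ)) (b := 1)).of_isClosed_subset (isClosed_AstarSet C) ?_
  rintro A ⟨hA, hAd⟩ i - j -
  have := hA.two_mul_abs_apply_le i j
  rw [hAd, hAd] at this
  exact abs_le.mp (by linarith)

theorem one_mem_AstarSet : (1 : Matrix (Fin C) (Fin C) ℝ) ∈ AstarSet C :=
  ⟨PosSemidef.one, fun i => one_apply_eq i⟩

end AstarSet

section S

variable {k C : ℕ} {ψ : (Fin k → ℝ) → ℝ} {lam : Fin C → ℝ}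

def shiftedEntries {m n ι : Type*} (i : m) (j : ι → n) : Matrix m n ℝ →ᵃ[ℝ] (ι → ℝ) :=
  (LinearMap.pi fun t => entryLinearMap ℝ ℝ i (j t)).toAffineMap - AffineMap.const ℝ _ 1

theorem shiftedEntries_apply {m n ι : Type*} (i : m) (j : ι → n) (A : Matrix m n ℝ) :
    shiftedEntries i j A = fun t => A i (j t) - 1 :=
  rfl

theorem S_eq_sum_shiftedEntries (A : Matrix (Fin C) (Fin C) ℝ) :
    S ψ lam A = ∑ p : Fin C × (Fin k → Fin C),
      (lam p.1 * ∏ t, lam (p.2 t)) * ψ (shiftedEntries p.1 p.2 A) :=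
  (Fintype.sum_prod_type' _).symm

theorem exists_shiftedEntries_ne (hk : 1 ≤ k) {A B : Matrix (Fin C) (Fin C) ℝ} (hAB : A ≠ B) :
    ∃ p : Fin C × (Fin k → Fin C), shiftedEntries p.1 p.2 A ≠ shiftedEntries p.1 p.2 B := by
  obtain ⟨i, c, hne⟩ : ∃ i c, A i c ≠ B i c := by
    by_contra! h
    exact hAB (Matrix.ext h)
  refine ⟨(i, fun _ => c), fun h => hne ?_⟩
  simpa [shiftedEntries_apply] using congrFun h ⟨0, hk⟩

theorem strictConvexOn_S (hk : 1 ≤ k) (hlam : ∀ i, 0 < lam i)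
    (hψ : StrictConvexOn ℝ Set.univ ψ) {s : Set (Matrix (Fin C) (Fin C) ℝ)} (hs : Convex ℝ s) :
    StrictConvexOn ℝ s (S ψ lam) := by
  simp only [funext S_eq_sum_shiftedEntries]
  exact hψ.sum_mul_comp_affineMap hs
    (fun p => mul_pos (hlam p.1) (Finset.prod_pos fun t _ => hlam (p.2 t))) _
    (fun _ _ => exists_shiftedEntries_ne hk)

theorem continuous_S (hψ : Continuous ψ) : Continuous (S ψ lam) := by
  unfold S
  fun_prop

end S

theorem stmt5_general (k C : ℕ) (hk : 1 ≤ k)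
    (lam : Fin C → ℝ) (hlam : ∀ i, lam i ∈ Set.Ioo (0 : ℝ) 1)
    (ψ : (Fin k → ℝ) → ℝ)
    (hconv : StrictConvexOn ℝ Set.univ ψ) :
    Convex ℝ (AstarSet C) ∧ IsCompact (AstarSet C) ∧
    StrictConvexOn ℝ (AstarSet C) (S ψ lam) ∧
    ∃! A, A ∈ AstarSet C ∧ ∀ B ∈ AstarSet C, S ψ lam A ≤ S ψ lam B := by
  have hS := strictConvexOn_S hk (fun i => (hlam i).1) hconv (convex_AstarSet C)
  have hψ : Continuous ψ := continuousOn_univ.mp (hconv.convexOn.continuousOn isOpen_univ)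
  exact ⟨convex_AstarSet C, isCompact_AstarSet C, hS, hS.existsUnique_isMinOn
    (isCompact_AstarSet C) ⟨1, one_mem_AstarSet C⟩ (continuous_S hψ).continuousOn⟩

/-- for strictly convex, argument-wise strictly increasing `ψ`:
(i) `𝒜*` is convex and compact; (ii) `S` is strictly convex on `𝒜*`;
(iii) `S` attains its minimum over `𝒜*` at a unique matrix. -/
theorem stmt5 (k C : ℕ) (hk : 1 ≤ k) (hC : 2 ≤ C)
    (lam : Fin C → ℝ) (hlam : ∀ i, lam i ∈ Set.Ioo (0 : ℝ) 1) (hsum : ∑ i, lam i = 1)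
    (ψ : (Fin k → ℝ) → ℝ)
    (hconv : StrictConvexOn ℝ Set.univ ψ) (hmono : ArgwiseStrictMono ψ) :
    Convex ℝ (AstarSet C) ∧ IsCompact (AstarSet C) ∧
    StrictConvexOn ℝ (AstarSet C) (S ψ lam) ∧
    ∃! A, A ∈ AstarSet C ∧ ∀ B ∈ AstarSet C, S ψ lam A ≤ S ψ lam B :=
  stmt5_general k C hk lam hlam ψ hconv
end

section
/- Let C ≥ 3 and a, b ∈ ℝ, and let A ∈ ℝ^{C×C} be the symmetric matrix with A_{ii} = 1 for all i, A_{1j} = A_{j1} = a for all j ≠ 1, and A_{ij} = b for all distinct i, j ∈ {2,…,C}. Then 1 − b is an eigenvalue of A of multiplicity at least C − 2, and the remaining two eigenvalues of A are ν± = 1 + (C−2)b/2 ± √((C−2)²b²/4 + (C−1)a²). Consequently, if A is positive semidefinite and singular (has 0 as an eigenvalue), then b = 1 or b = ((C−1)a² − 1)/(C−2). -/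
/-!
On vectors that vanish at `i₀` and have zero sum, a codimension-two subspace, the matrix acts as
`1 - b`. The vectors that are constant off `i₀` form an invariant plane on which it acts as the
`2 × 2` matrix `[[1, (C - 1) a], [a, 1 + (C - 2) b]]`, whose characteristic polynomial
`(ν - 1) (ν - 1 - (C - 2) b) - (C - 1) a²` has the roots `ν±`. Two rows `j, j' ≠ i₀` of `A v`
differ by `(1 - b) (v j - v j')`, so for `b ≠ 1` a null vector lies in that plane and the
`2 × 2` determinant `1 + (C - 2) b - (C - 1) a²` vanishes.
-/

open Matrix

section

variable {K : Type*} [Field K] {n : Type*} [DecidableEq n] (i₀ : n)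

def pivotVec (x y : K) : n → K := fun k => if k = i₀ then x else y

def borderedMatrix (a b : K) : Matrix n n K :=
  of fun i j => if i = j then 1 else if i = i₀ ∨ j = i₀ then a else b

variable {i₀}

theorem pivotVec_ne_zero [Nontrivial n] {x y : K} (h : x ≠ 0 ∨ y ≠ 0) : pivotVec i₀ x y ≠ 0 := by
  obtain ⟨i₁, hi₁⟩ := exists_ne i₀
  intro h0
  have hx := congrFun h0 i₀
  have hy := congrFun h0 i₁
  simp only [pivotVec, if_true, if_neg hi₁, Pi.zero_apply] at hx hy
  tauto

theorem smul_pivotVec (c x y : K) : c • pivotVec i₀ x y = pivotVec i₀ (c * x) (c * y) := by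
  ext k
  by_cases hk : k = i₀ <;> simp [pivotVec, hk]

variable [Fintype n] {a b : K}

theorem hasEigenvalue_toLin'_of_mulVec_eq_smul {M : Matrix n n K} {μ : K} {v : n → K} (hv : v ≠ 0)
    (h : M *ᵥ v = μ • v) : Module.End.HasEigenvalue (toLin' M) μ :=
  Module.End.hasEigenvalue_of_hasEigenvector
    ⟨by rw [Module.End.mem_eigenspace_iff, toLin'_apply, h], hv⟩

theorem borderedMatrix_mulVec_apply_self (v : n → K) :
    (borderedMatrix i₀ a b *ᵥ v) i₀ = v i₀ + a * (∑ k, v k - v i₀) := by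
  have hrow : ∀ k,
      borderedMatrix i₀ a b i₀ k * v k = a * v k + if k = i₀ then (1 - a) * v k else 0 := by
    intro k
    by_cases hk : k = i₀ <;> simp [borderedMatrix, hk, eq_comm (a := i₀)]
    ring
  simp only [mulVec, dotProduct, hrow, Finset.sum_add_distrib, Finset.sum_ite_eq',
    Finset.mem_univ, if_true, ← Finset.mul_sum]
  ring

theorem borderedMatrix_mulVec_apply_of_ne (v : n → K) {j : n} (hj : j ≠ i₀) :
    (borderedMatrix i₀ a b *ᵥ v) j = (1 - b) * v j + a * v i₀ + b * (∑ k, v k - v i₀) := by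
  have hrow : ∀ k, borderedMatrix i₀ a b j k * v k =
      b * v k + (if k = j then (1 - b) * v k else 0) + if k = i₀ then (a - b) * v k else 0 := by
    intro k
    by_cases hkj : k = j
    · subst hkj; simp [borderedMatrix, hj]; ring
    · by_cases hk : k = i₀
      · subst hk; simp [borderedMatrix, hj, Ne.symm hj]; ring
      · simp [borderedMatrix, hk, hj, hkj, Ne.symm hkj]
  simp only [mulVec, dotProduct, hrow, Finset.sum_add_distrib, Finset.sum_ite_eq',
    Finset.mem_univ, if_true, ← Finset.mul_sum]
  ring

theorem borderedMatrix_mulVec_eq_smul (v : n → K) (hv₀ : v i₀ = 0) (hsum : ∑ k, v k = 0) :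
    borderedMatrix i₀ a b *ᵥ v = (1 - b) • v := by
  ext j
  by_cases hj : j = i₀
  · subst hj; simp [borderedMatrix_mulVec_apply_self, hv₀, hsum]
  · simp [borderedMatrix_mulVec_apply_of_ne v hj, hv₀, hsum]

theorem card_sub_two_le_finrank_eigenspace :
    Fintype.card n - 2 ≤
      Module.finrank K (Module.End.eigenspace (toLin' (borderedMatrix i₀ a b)) (1 - b)) := by
  let φ : (n → K) →ₗ[K] K × K := (LinearMap.proj i₀).prod (∑ k, LinearMap.proj k)
  have hker : LinearMap.ker φ ≤ Module.End.eigenspace (toLin' (borderedMatrix i₀ a b)) (1 - b) := by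
    intro v hv
    simp only [φ, LinearMap.ker_prod, Submodule.mem_inf, LinearMap.mem_ker, LinearMap.coe_proj,
      Function.eval, LinearMap.coe_sum, Finset.sum_apply] at hv
    rw [Module.End.mem_eigenspace_iff, toLin'_apply]
    exact borderedMatrix_mulVec_eq_smul v hv.1 hv.2
  have hrank := LinearMap.finrank_range_add_finrank_ker φ
  have hrange : Module.finrank K (LinearMap.range φ) ≤ 2 := by
    simpa using Submodule.finrank_le (LinearMap.range φ)
  have := Submodule.finrank_mono hker
  rw [Module.finrank_fintype_fun_eq_card] at hrank
  omega

theorem sum_pivotVec (x y : K) : ∑ k, pivotVec i₀ x y k = x + (Fintype.card n - 1) * y := by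
  have hcard : 1 ≤ Fintype.card n := Fintype.card_pos_iff.mpr ⟨i₀⟩
  simp [pivotVec, Finset.sum_ite, Finset.filter_eq', Finset.filter_ne', Finset.card_erase_of_mem,
    Nat.cast_sub hcard]

theorem borderedMatrix_mulVec_pivotVec (x y : K) :
    borderedMatrix i₀ a b *ᵥ pivotVec i₀ x y =
      pivotVec i₀ (x + (Fintype.card n - 1) * a * y)
        (a * x + (1 + (Fintype.card n - 2) * b) * y) := by
  ext j
  by_cases hj : j = i₀
  · subst hj
    rw [borderedMatrix_mulVec_apply_self, sum_pivotVec]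
    simp only [pivotVec, if_true]
    ring
  · rw [borderedMatrix_mulVec_apply_of_ne _ hj, sum_pivotVec]
    simp only [pivotVec, if_true, if_neg hj]
    ring

theorem hasEigenvalue_toLin'_borderedMatrix_of_eq [Nontrivial n] {ν : K}
    (hν : (ν - 1) * (ν - 1 - (Fintype.card n - 2) * b) = (Fintype.card n - 1) * a ^ 2) :
    Module.End.HasEigenvalue (toLin' (borderedMatrix i₀ a b)) ν := by
  by_cases hdeg : ν - 1 - (Fintype.card n - 2) * b = 0 ∧ a = 0
  · obtain ⟨hν', rfl⟩ := hdeg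
    refine hasEigenvalue_toLin'_of_mulVec_eq_smul (v := pivotVec i₀ 0 1)
      (pivotVec_ne_zero (Or.inr one_ne_zero)) ?_
    rw [borderedMatrix_mulVec_pivotVec, smul_pivotVec]
    congr 1
    · ring
    · linear_combination -hν'
  · refine hasEigenvalue_toLin'_of_mulVec_eq_smul
      (pivotVec_ne_zero (i₀ := i₀) (x := ν - 1 - (Fintype.card n - 2) * b) (not_and_or.mp hdeg)) ?_
    rw [borderedMatrix_mulVec_pivotVec, smul_pivotVec]
    congr 1
    · linear_combination -hν
    · ring

theorem borderedMatrix_mulVec_sub_mulVec (v : n → K) {j j' : n} (hj : j ≠ i₀) (hj' : j' ≠ i₀) :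
    (borderedMatrix i₀ a b *ᵥ v) j - (borderedMatrix i₀ a b *ᵥ v) j' = (1 - b) * (v j - v j') := by
  rw [borderedMatrix_mulVec_apply_of_ne v hj, borderedMatrix_mulVec_apply_of_ne v hj']
  ring

theorem one_add_card_sub_two_mul_eq_of_mulVec_eq_zero [Nontrivial n] (hb : b ≠ 1) {v : n → K}
    (hv : v ≠ 0) (hMv : borderedMatrix i₀ a b *ᵥ v = 0) :
    1 + (Fintype.card n - 2) * b = (Fintype.card n - 1) * a ^ 2 := by
  obtain ⟨i₁, hi₁⟩ := exists_ne i₀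
  have hconst : ∀ j, j ≠ i₀ → v j = v i₁ := fun j hj => by
    have h := borderedMatrix_mulVec_sub_mulVec (a := a) (b := b) v hj hi₁
    simp only [hMv, Pi.zero_apply, sub_self, zero_eq_mul] at h
    exact sub_eq_zero.mp (h.resolve_left (sub_ne_zero.mpr hb.symm))
  have hv_eq : v = pivotVec i₀ (v i₀) (v i₁) := by
    ext j
    by_cases hj : j = i₀
    · simp [pivotVec, hj]
    · simp [pivotVec, hj, hconst j hj]
  rw [hv_eq, borderedMatrix_mulVec_pivotVec] at hMv
  have h₀ := congrFun hMv i₀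
  have h₁ := congrFun hMv i₁
  simp only [pivotVec, if_true, if_neg hi₁, Pi.zero_apply] at h₀ h₁
  have hy : v i₁ ≠ 0 := fun hy => hv (by
    rw [hv_eq, hy, show v i₀ = 0 by linear_combination h₀ - (↑(Fintype.card n) - 1) * a * hy]
    ext k; simp [pivotVec])
  apply mul_right_cancel₀ hy
  linear_combination h₁ - a * h₀

end

theorem stmt14_general (C : ℕ) (hC : 3 ≤ C) (a b : ℝ)
    (i₀ : Fin C)
    (A : Matrix (Fin C) (Fin C) ℝ)
    (hA : ∀ i j, A i j = if i = j then 1 else if i = i₀ ∨ j = i₀ then a else b) :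
    (C - 2 ≤ Module.finrank ℝ (Module.End.eigenspace (Matrix.toLin' A) (1 - b))) ∧
    Module.End.HasEigenvalue (Matrix.toLin' A)
      (1 + ((C : ℝ) - 2) * b / 2 +
        Real.sqrt (((C : ℝ) - 2) ^ 2 * b ^ 2 / 4 + ((C : ℝ) - 1) * a ^ 2)) ∧
    Module.End.HasEigenvalue (Matrix.toLin' A)
      (1 + ((C : ℝ) - 2) * b / 2 -
        Real.sqrt (((C : ℝ) - 2) ^ 2 * b ^ 2 / 4 + ((C : ℝ) - 1) * a ^ 2)) ∧
    (A.PosSemidef → (∃ v : Fin C → ℝ, v ≠ 0 ∧ A.mulVec v = 0) →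
      b = 1 ∨ b = (((C : ℝ) - 1) * a ^ 2 - 1) / ((C : ℝ) - 2)) := by
  obtain rfl : A = borderedMatrix i₀ a b := by ext i j; simp [hA, borderedMatrix]
  have : Nontrivial (Fin C) := Fin.nontrivial_iff_two_le.mpr (by omega)
  have hC' : (3 : ℝ) ≤ C := by exact_mod_cast hC
  have hsqrt := Real.sq_sqrt (x := ((C : ℝ) - 2) ^ 2 * b ^ 2 / 4 + ((C : ℝ) - 1) * a ^ 2)
    (by nlinarith [sq_nonneg a, sq_nonneg (((C : ℝ) - 2) * b)])
  refine ⟨by simpa using card_sub_two_le_finrank_eigenspace (K := ℝ) (i₀ := i₀) (a := a) (b := b),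
    hasEigenvalue_toLin'_borderedMatrix_of_eq ?_, hasEigenvalue_toLin'_borderedMatrix_of_eq ?_, ?_⟩
  · rw [Fintype.card_fin]; linear_combination hsqrt
  · rw [Fintype.card_fin]; linear_combination hsqrt
  · rintro - ⟨v, hv, hAv⟩
    refine or_iff_not_imp_left.mpr fun hb => ?_
    have h := one_add_card_sub_two_mul_eq_of_mulVec_eq_zero hb hv hAv
    rw [Fintype.card_fin] at h
    rw [eq_div_iff (by linarith)]
    linear_combination h

/-- for `C ≥ 3` and the symmetric matrix `A` with unit diagonal,
first-row/column off-diagonal entries `a`, and other off-diagonal entries `b`: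
`1 − b` is an eigenvalue of multiplicity at least `C − 2`, the two remaining eigenvalues are
`1 + (C−2)b/2 ± √((C−2)²b²/4 + (C−1)a²)`, and if `A` is PSD and singular then `b = 1` or
`b = ((C−1)a² − 1)/(C−2)`. -/
theorem stmt14 (C : ℕ) (hC : 3 ≤ C) (a b : ℝ)
    (i₀ : Fin C) (hi₀ : (i₀ : ℕ) = 0)
    (A : Matrix (Fin C) (Fin C) ℝ)
    (hA : ∀ i j, A i j = if i = j then 1 else if i = i₀ ∨ j = i₀ then a else b) :
    (C - 2 ≤ Module.finrank ℝ (Module.End.eigenspace (Matrix.toLin' A) (1 - b))) ∧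
    Module.End.HasEigenvalue (Matrix.toLin' A)
      (1 + ((C : ℝ) - 2) * b / 2 +
        Real.sqrt (((C : ℝ) - 2) ^ 2 * b ^ 2 / 4 + ((C : ℝ) - 1) * a ^ 2)) ∧
    Module.End.HasEigenvalue (Matrix.toLin' A)
      (1 + ((C : ℝ) - 2) * b / 2 -
        Real.sqrt (((C : ℝ) - 2) ^ 2 * b ^ 2 / 4 + ((C : ℝ) - 1) * a ^ 2)) ∧
    (A.PosSemidef → (∃ v : Fin C → ℝ, v ≠ 0 ∧ A.mulVec v = 0) →
      b = 1 ∨ b = (((C : ℝ) - 1) * a ^ 2 - 1) / ((C : ℝ) - 2)) :=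
  stmt14_general C hC a b i₀ A hA
end

section
/- Let k ≥ 1, C ≥ 3, and let the class probabilities satisfy 1 > λ₁ > λ₂ = … = λ_C = (1−λ₁)/(C−1) > 0. Let ψ : ℝ^k → ℝ be strictly convex and argument-wise strictly increasing, let γ_C := 2(C−1)/(C−2), and suppose Δ₂ > 0 satisfies |ψ(v) − ψ(v')| ≤ Δ₂·‖v − v'‖₂ for all v, v' ∈ [−2,0]^k, and δ_𝟙 > 0 satisfies (t − t')·δ_𝟙 ≤ ψ(t·𝟙) − ψ(t'·𝟙) for all t' ≤ t in [−2,0], where 𝟙 = (1,…,1) ∈ ℝ^k. If λ₁ ≥ 1/(1 + δ_𝟙/(γ_C·√k·Δ₂)), then the function a ↦ S_SCL(A*(a)) is strictly increasing on [−1,1]: for all −1 ≤ a' < a ≤ 1, S_SCL(A*(a')) < S_SCL(A*(a)); in particular it is minimized over [−1,1] only at a = −1, at which A*(−1) has all first-row/column off-diagonal entries equal to −1 and all other off-diagonal entries equal to 1, so any M ∈ ℝ^{d×C} with unit-norm columns μ₁,…,μ_C and MᵀM = A*(−1) satisfies μᵢ = −μ₁ for all i ≠ 1 (minority collapse in the SCL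 setting). -/
open Matrix

/-- The supervised contrastive objective
`S_SCL(A) = ∑ᵢ λᵢ ∑_{j₁,…,j_k ≠ i} ∏ₜ (λ_{jₜ}/(1−λᵢ)) ψ(A_{i j₁}−1, …, A_{i j_k}−1)`. -/
noncomputable def SSCL {k C : ℕ} (ψ : (Fin k → ℝ) → ℝ) (lam : Fin C → ℝ)
    (A : Matrix (Fin C) (Fin C) ℝ) : ℝ :=
  ∑ i : Fin C, lam i *
    ∑ j ∈ Finset.univ.filter (fun j : Fin k → Fin C => ∀ t, j t ≠ i),
      (∏ t, lam (j t) / (1 - lam i)) * ψ (fun t => A i (j t) - 1)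

/-- The one-parameter family `A*(a)`: unit diagonal, first-row/first-column off-diagonal
entries `a`, all other off-diagonal entries `b(a) = ((C−1)a² − 1)/(C−2)`. -/
noncomputable def AstarMat (C : ℕ) (a : ℝ) : Matrix (Fin C) (Fin C) ℝ :=
  Matrix.of fun i j =>
    if i = j then 1
    else if (i : ℕ) = 0 ∨ (j : ℕ) = 0 then a
    else (((C : ℝ) - 1) * a ^ 2 - 1) / ((C : ℝ) - 2)

/-!
The majority row of `A*(a)` is the constant vector `(a - 1)𝟙`, so raising `a` from `a'` gains at
least `λ₁ δ_𝟙 (a - a')` there. Every other off-diagonal entry moves by at most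
`(a - a') · max 1 ((C-1)|a + a'|/(C-2))`, which is strictly less than `γ_C (a - a')`, so by the
Lipschitz bound and `‖v‖₂ ≤ √k ‖v‖_∞` the minority rows lose strictly less than
`(1 - λ₁) γ_C √k Δ₂ (a - a')`. The threshold on `λ₁` says exactly `(1 - λ₁) γ_C √k Δ₂ ≤ λ₁ δ_𝟙`.
For the collapse, `‖μᵢ + μ₁‖² = 2 + 2⟨μᵢ, μ₁⟩ = 0`.
-/

open Finset

lemma sum_filter_forall_ne_prod_eq_pow {ι : Type*} [Fintype ι] [DecidableEq ι] (k : ℕ)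
    (f : ι → ℝ) (i : ι) :
    ∑ j ∈ univ.filter (fun j : Fin k → ι => ∀ t, j t ≠ i), ∏ t, f (j t) =
      (∑ x ∈ univ.erase i, f x) ^ k := by
  rw [sum_pow']
  congr 1
  ext j
  simp [Fintype.mem_piFinset]

lemma le_sum_mul_of_sum_eq_one {α : Type*} {s : Finset α} {w x : α → ℝ} {c : ℝ}
    (hw₀ : ∀ j ∈ s, 0 ≤ w j) (hw₁ : ∑ j ∈ s, w j = 1) (hc : ∀ j ∈ s, c ≤ x j) :
    c ≤ ∑ j ∈ s, w j * x j :=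
  calc c = ∑ j ∈ s, w j * c := by rw [← sum_mul, hw₁, one_mul]
    _ ≤ ∑ j ∈ s, w j * x j := sum_le_sum fun j hj => mul_le_mul_of_nonneg_left (hc j hj) (hw₀ j hj)

lemma sqrt_sum_sq_sub_le {k : ℕ} {v v' : Fin k → ℝ} {r : ℝ} (hr : 0 ≤ r)
    (h : ∀ t, |v t - v' t| ≤ r) :
    Real.sqrt (∑ t, (v t - v' t) ^ 2) ≤ Real.sqrt k * r := by
  have hsum : ∑ t, (v t - v' t) ^ 2 ≤ k * r ^ 2 := by
    calc ∑ t, (v t - v' t) ^ 2 ≤ ∑ _t : Fin k, r ^ 2 :=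
          sum_le_sum fun t _ => sq_le_sq' (abs_le.mp (h t)).1 (abs_le.mp (h t)).2
      _ = k * r ^ 2 := by simp
  calc Real.sqrt (∑ t, (v t - v' t) ^ 2) ≤ Real.sqrt (k * r ^ 2) := Real.sqrt_le_sqrt hsum
    _ = Real.sqrt k * r := by rw [Real.sqrt_mul (Nat.cast_nonneg k), Real.sqrt_sq hr]

lemma one_sub_mul_le_mul_of_one_div_le {l δ D : ℝ} (hδ : 0 < δ) (hD : 0 < D)
    (h : 1 / (1 + δ / D) ≤ l) : (1 - l) * D ≤ l * δ := by
  rw [div_le_iff₀ (by positivity)] at h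
  have : l * (δ / D) * D = l * δ := by field_simp
  nlinarith

section SSCL

variable {k C : ℕ} (ψ : (Fin k → ℝ) → ℝ) {lam : Fin C → ℝ}

lemma sum_SSCL_weights_eq_one (hsum : ∑ i, lam i = 1) (i : Fin C) (hi : lam i ≠ 1) :
    ∑ j ∈ univ.filter (fun j : Fin k → Fin C => ∀ t, j t ≠ i),
      ∏ t, lam (j t) / (1 - lam i) = 1 := by
  refine (sum_filter_forall_ne_prod_eq_pow k (fun x => lam x / (1 - lam i)) i).trans ?_
  rw [← sum_div, sum_erase_eq_sub (mem_univ i), hsum, div_self (sub_ne_zero.mpr (Ne.symm hi)),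
    one_pow]

lemma sum_mul_le_SSCL_sub (hlam : ∀ i, 0 ≤ lam i) (hlt : ∀ i, lam i < 1)
    (hsum : ∑ i, lam i = 1) (A A' : Matrix (Fin C) (Fin C) ℝ) (c : Fin C → ℝ)
    (hc : ∀ i (j : Fin k → Fin C), (∀ t, j t ≠ i) →
      c i ≤ ψ (fun t => A i (j t) - 1) - ψ (fun t => A' i (j t) - 1)) :
    ∑ i, lam i * c i ≤ SSCL ψ lam A - SSCL ψ lam A' := by
  rw [SSCL, SSCL, ← sum_sub_distrib]
  refine sum_le_sum fun i _ => ?_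
  rw [← mul_sub, ← sum_sub_distrib]
  refine mul_le_mul_of_nonneg_left ?_ (hlam i)
  simp_rw [← mul_sub]
  refine le_sum_mul_of_sum_eq_one (fun j _ => ?_) (sum_SSCL_weights_eq_one hsum i (hlt i).ne)
    fun j hj => hc i j (mem_filter.mp hj).2
  exact prod_nonneg fun t _ => div_nonneg (hlam _) (sub_nonneg.mpr (hlt i).le)

end SSCL

section AstarMat

variable {C : ℕ}

lemma AstarMat_apply_of_val_eq_zero {i j : Fin C} (hi : (i : ℕ) = 0) (hij : j ≠ i) (a : ℝ) :
    AstarMat C a i j = a := by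
  simp [AstarMat, hij.symm, hi]

lemma AstarMat_sub_one_mem_Icc (hC : 3 ≤ C) {a : ℝ} (ha : a ∈ Set.Icc (-1 : ℝ) 1)
    {i j : Fin C} (hij : j ≠ i) : AstarMat C a i j - 1 ∈ Set.Icc (-2 : ℝ) 0 := by
  have hC' : (3 : ℝ) ≤ C := by exact_mod_cast hC
  have hsq : a ^ 2 ≤ 1 := by nlinarith [ha.1, ha.2]
  have hb : (((C : ℝ) - 1) * a ^ 2 - 1) / ((C : ℝ) - 2) ∈ Set.Icc (-1 : ℝ) 1 := by
    constructor
    · rw [le_div_iff₀ (by linarith)]; nlinarith [sq_nonneg a]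
    · rw [div_le_iff₀ (by linarith)]; nlinarith
  simp only [AstarMat, Matrix.of_apply, if_neg hij.symm]
  split_ifs
  · exact ⟨by linarith [ha.1], by linarith [ha.2]⟩
  · exact ⟨by linarith [hb.1], by linarith [hb.2]⟩

lemma abs_AstarMat_sub_le (a a' : ℝ) {i j : Fin C} (hij : j ≠ i) :
    |AstarMat C a i j - AstarMat C a' i j| ≤
      |a - a'| * max 1 |((C : ℝ) - 1) / ((C : ℝ) - 2) * (a + a')| := by
  simp only [AstarMat, Matrix.of_apply, if_neg hij.symm]
  split_ifs
  · exact le_mul_of_one_le_right (abs_nonneg _) (le_max_left _ _)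
  · have : (((C : ℝ) - 1) * a ^ 2 - 1) / ((C : ℝ) - 2) - (((C : ℝ) - 1) * a' ^ 2 - 1) / ((C : ℝ) - 2)
        = (a - a') * (((C : ℝ) - 1) / ((C : ℝ) - 2) * (a + a')) := by ring
    rw [this, abs_mul]
    exact mul_le_mul_of_nonneg_left (le_max_right _ _) (abs_nonneg _)

lemma AstarMat_row_of_val_eq_zero {k : ℕ} {i : Fin C} (hi : (i : ℕ) = 0) {j : Fin k → Fin C}
    (hj : ∀ t, j t ≠ i) (a : ℝ) :
    (fun t => AstarMat C a i (j t) - 1) = (a - 1) • (fun _ : Fin k => (1 : ℝ)) := by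
  funext t
  simp [AstarMat_apply_of_val_eq_zero hi (hj t)]

lemma abs_AstarMat_row_sub_le (hC : 3 ≤ C) {k : ℕ} {ψ : (Fin k → ℝ) → ℝ} {Δ₂ : ℝ}
    (hΔ : ∀ v v' : Fin k → ℝ, (∀ i, v i ∈ Set.Icc (-2 : ℝ) 0) →
      (∀ i, v' i ∈ Set.Icc (-2 : ℝ) 0) →
      |ψ v - ψ v'| ≤ Δ₂ * Real.sqrt (∑ i, (v i - v' i) ^ 2))
    (hΔ₂ : 0 ≤ Δ₂) {a a' : ℝ} (ha : a ∈ Set.Icc (-1 : ℝ) 1) (ha' : a' ∈ Set.Icc (-1 : ℝ) 1)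
    {i : Fin C} {j : Fin k → Fin C} (hj : ∀ t, j t ≠ i) :
    |ψ (fun t => AstarMat C a i (j t) - 1) - ψ (fun t => AstarMat C a' i (j t) - 1)| ≤
      Δ₂ * (Real.sqrt k * (|a - a'| * max 1 |((C : ℝ) - 1) / ((C : ℝ) - 2) * (a + a')|)) := by
  refine (hΔ _ _ (fun t => AstarMat_sub_one_mem_Icc hC ha (hj t))
    (fun t => AstarMat_sub_one_mem_Icc hC ha' (hj t))).trans ?_
  refine mul_le_mul_of_nonneg_left (sqrt_sum_sq_sub_le (by positivity) fun t => ?_) hΔ₂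
  rw [sub_sub_sub_cancel_right]
  exact abs_AstarMat_sub_le a a' (hj t)

lemma max_one_abs_lt_gammaC (hC : 3 ≤ C) {s : ℝ} (hs : |s| < 2) :
    max 1 |((C : ℝ) - 1) / ((C : ℝ) - 2) * s| < 2 * ((C : ℝ) - 1) / ((C : ℝ) - 2) := by
  have hC' : (3 : ℝ) ≤ C := by exact_mod_cast hC
  have hr : 0 < ((C : ℝ) - 1) / ((C : ℝ) - 2) := div_pos (by linarith) (by linarith)
  rw [mul_div_assoc, abs_mul, abs_of_pos hr]
  have hr₁ : 1 < ((C : ℝ) - 1) / ((C : ℝ) - 2) := by rw [one_lt_div (by linarith)]; linarith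
  exact max_lt (by linarith) (by nlinarith [abs_nonneg s])

lemma SSCL_AstarMat_sub_ge {k : ℕ} (hC : 3 ≤ C) {i₀ : Fin C} (hi₀ : (i₀ : ℕ) = 0)
    {lam : Fin C → ℝ} (hlam : ∀ i, 0 ≤ lam i) (hlt : ∀ i, lam i < 1) (hsum : ∑ i, lam i = 1)
    {ψ : (Fin k → ℝ) → ℝ} {Δ₂ : ℝ} (hΔ₂ : 0 ≤ Δ₂)
    (hΔ : ∀ v v' : Fin k → ℝ, (∀ i, v i ∈ Set.Icc (-2 : ℝ) 0) →
      (∀ i, v' i ∈ Set.Icc (-2 : ℝ) 0) →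
      |ψ v - ψ v'| ≤ Δ₂ * Real.sqrt (∑ i, (v i - v' i) ^ 2))
    {δone : ℝ}
    (hδ : ∀ t t' : ℝ, t ∈ Set.Icc (-2 : ℝ) 0 → t' ∈ Set.Icc (-2 : ℝ) 0 → t' ≤ t →
      (t - t') * δone ≤ ψ (t • (fun _ : Fin k => (1 : ℝ)))
                        - ψ (t' • (fun _ : Fin k => (1 : ℝ))))
    {a a' : ℝ} (ha : a ∈ Set.Icc (-1 : ℝ) 1) (ha' : a' ∈ Set.Icc (-1 : ℝ) 1) (haa : a' ≤ a) :
    lam i₀ * ((a - a') * δone) -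
        (1 - lam i₀) * (Δ₂ * (Real.sqrt k * ((a - a') *
          max 1 |((C : ℝ) - 1) / ((C : ℝ) - 2) * (a + a')|))) ≤
      SSCL ψ lam (AstarMat C a) - SSCL ψ lam (AstarMat C a') := by
  set B := Δ₂ * (Real.sqrt k * ((a - a') * max 1 |((C : ℝ) - 1) / ((C : ℝ) - 2) * (a + a')|))
  let c : Fin C → ℝ := fun i => if i = i₀ then (a - a') * δone else -B
  have hc : ∑ i, lam i * c i = lam i₀ * ((a - a') * δone) - (1 - lam i₀) * B := by
    rw [← add_sum_erase _ _ (mem_univ i₀),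
      sum_congr rfl fun i hi => by rw [show c i = -B from if_neg (ne_of_mem_erase hi)],
      ← sum_mul, sum_erase_eq_sub (mem_univ i₀), hsum]
    simp only [c, if_true]
    ring
  rw [← hc]
  refine sum_mul_le_SSCL_sub ψ hlam hlt hsum _ _ c fun i j hj => ?_
  by_cases hi : i = i₀
  · subst hi
    simp only [c, if_true, AstarMat_row_of_val_eq_zero hi₀ hj]
    simpa using hδ (a - 1) (a' - 1) ⟨by linarith [ha.1], by linarith [ha.2]⟩
      ⟨by linarith [ha'.1], by linarith [ha'.2]⟩ (by linarith)
  · have hrow := abs_AstarMat_row_sub_le hC hΔ hΔ₂ ha ha' hj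
    rw [abs_of_nonneg (sub_nonneg.mpr haa)] at hrow
    exact (if_neg hi).trans_le (neg_le_of_abs_le hrow)

end AstarMat

lemma sum_eq_one_of_forall_ne_eq {C : ℕ} (hC : 2 ≤ C) {lam : Fin C → ℝ} {i₀ : Fin C}
    (hminor : ∀ i : Fin C, i ≠ i₀ → lam i = (1 - lam i₀) / ((C : ℝ) - 1)) :
    ∑ i, lam i = 1 := by
  have hC' : (2 : ℝ) ≤ C := by exact_mod_cast hC
  rw [← add_sum_erase _ _ (mem_univ i₀), sum_congr rfl fun i hi => hminor i (ne_of_mem_erase hi),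
    sum_const, card_erase_of_mem (mem_univ i₀), card_univ, Fintype.card_fin, nsmul_eq_mul,
    Nat.cast_pred (by omega), mul_div_cancel₀ _ (by linarith : (C : ℝ) - 1 ≠ 0)]
  ring

theorem SSCL_AstarMat_strictMonoOn (k C : ℕ) (hk : 1 ≤ k) (hC : 3 ≤ C)
    (i₀ : Fin C) (hi₀ : (i₀ : ℕ) = 0)
    (lam : Fin C → ℝ)
    (hlt1 : lam i₀ < 1)
    (hminor : ∀ i : Fin C, i ≠ i₀ → lam i = (1 - lam i₀) / ((C : ℝ) - 1))
    (hmaj : (1 - lam i₀) / ((C : ℝ) - 1) < lam i₀)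
    (hpos : 0 < (1 - lam i₀) / ((C : ℝ) - 1))
    (ψ : (Fin k → ℝ) → ℝ)
    (Δ₂ : ℝ) (hΔpos : 0 < Δ₂)
    (hΔ : ∀ v v' : Fin k → ℝ, (∀ i, v i ∈ Set.Icc (-2 : ℝ) 0) →
      (∀ i, v' i ∈ Set.Icc (-2 : ℝ) 0) →
      |ψ v - ψ v'| ≤ Δ₂ * Real.sqrt (∑ i, (v i - v' i) ^ 2))
    (δone : ℝ) (hδpos : 0 < δone)
    (hδ : ∀ t t' : ℝ, t ∈ Set.Icc (-2 : ℝ) 0 → t' ∈ Set.Icc (-2 : ℝ) 0 → t' ≤ t →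
      (t - t') * δone ≤ ψ (t • (fun _ : Fin k => (1 : ℝ)))
                        - ψ (t' • (fun _ : Fin k => (1 : ℝ))))
    (hlam1 : 1 / (1 + δone / ((2 * ((C : ℝ) - 1) / ((C : ℝ) - 2)) * Real.sqrt k * Δ₂))
              ≤ lam i₀) :
    StrictMonoOn (fun a => SSCL ψ lam (AstarMat C a)) (Set.Icc (-1) 1) := by
  intro a' ha' a ha haa
  have hlam : ∀ i, 0 < lam i ∧ lam i < 1 := by
    intro i
    by_cases hi : i = i₀
    · subst hi; exact ⟨hpos.trans hmaj, hlt1⟩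
    · rw [hminor i hi]; exact ⟨hpos, by linarith⟩
  have hbound := SSCL_AstarMat_sub_ge hC hi₀ (fun i => (hlam i).1.le) (fun i => (hlam i).2)
    (sum_eq_one_of_forall_ne_eq (by omega) hminor) hΔpos.le hΔ hδ ha ha' haa.le
  set γ := 2 * ((C : ℝ) - 1) / ((C : ℝ) - 2)
  set L := max 1 |((C : ℝ) - 1) / ((C : ℝ) - 2) * (a + a')|
  have hC' : (3 : ℝ) ≤ C := by exact_mod_cast hC
  have hLγ : L < γ :=
    max_one_abs_lt_gammaC hC (abs_lt.mpr ⟨by linarith [ha'.1], by linarith [ha.2]⟩)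
  have hsk : 0 < Real.sqrt k := Real.sqrt_pos.mpr (by exact_mod_cast hk)
  have hthreshold : (1 - lam i₀) * (γ * Real.sqrt k * Δ₂) ≤ lam i₀ * δone :=
    one_sub_mul_le_mul_of_one_div_le hδpos
      (mul_pos (mul_pos (div_pos (by linarith) (by linarith)) hsk) hΔpos) hlam1
  have hloss : 0 < (1 - lam i₀) * (Δ₂ * Real.sqrt k * (a - a')) :=
    mul_pos (sub_pos.mpr (hlam i₀).2) (mul_pos (mul_pos hΔpos hsk) (sub_pos.mpr haa))
  have hgain : 0 < lam i₀ * ((a - a') * δone) -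
      (1 - lam i₀) * (Δ₂ * (Real.sqrt k * ((a - a') * L))) := by
    nlinarith [sub_pos.mpr haa]
  show SSCL ψ lam (AstarMat C a') < SSCL ψ lam (AstarMat C a)
  linarith

lemma eq_neg_of_sum_sq_eq_one_of_sum_mul_eq_neg_one {ι : Type*} [Fintype ι] {u v : ι → ℝ}
    (hu : ∑ r, u r ^ 2 = 1) (hv : ∑ r, v r ^ 2 = 1) (huv : ∑ r, u r * v r = -1) : u = -v := by
  have hzero : ∑ r, (u r + v r) ^ 2 = 0 := by
    simp only [add_sq, sum_add_distrib, mul_assoc, ← mul_sum, hu, hv, huv]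
    ring
  funext r
  have := (sum_eq_zero_iff_of_nonneg fun r _ => sq_nonneg (u r + v r)).mp hzero r (mem_univ r)
  rw [Pi.neg_apply, eq_neg_iff_add_eq_zero]
  exact pow_eq_zero_iff two_ne_zero |>.mp this

theorem stmt18_general (k C : ℕ) (hk : 1 ≤ k) (hC : 3 ≤ C)
    (i₀ : Fin C) (hi₀ : (i₀ : ℕ) = 0)
    (lam : Fin C → ℝ)
    (hlt1 : lam i₀ < 1)
    (hminor : ∀ i : Fin C, i ≠ i₀ → lam i = (1 - lam i₀) / ((C : ℝ) - 1))
    (hmaj : (1 - lam i₀) / ((C : ℝ) - 1) < lam i₀)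
    (hpos : 0 < (1 - lam i₀) / ((C : ℝ) - 1))
    (ψ : (Fin k → ℝ) → ℝ)
    (Δ₂ : ℝ) (hΔpos : 0 < Δ₂)
    (hΔ : ∀ v v' : Fin k → ℝ, (∀ i, v i ∈ Set.Icc (-2 : ℝ) 0) →
      (∀ i, v' i ∈ Set.Icc (-2 : ℝ) 0) →
      |ψ v - ψ v'| ≤ Δ₂ * Real.sqrt (∑ i, (v i - v' i) ^ 2))
    (δone : ℝ) (hδpos : 0 < δone)
    (hδ : ∀ t t' : ℝ, t ∈ Set.Icc (-2 : ℝ) 0 → t' ∈ Set.Icc (-2 : ℝ) 0 → t' ≤ t →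
      (t - t') * δone ≤ ψ (t • (fun _ : Fin k => (1 : ℝ)))
                        - ψ (t' • (fun _ : Fin k => (1 : ℝ))))
    (hlam1 : 1 / (1 + δone / ((2 * ((C : ℝ) - 1) / ((C : ℝ) - 2)) * Real.sqrt k * Δ₂))
              ≤ lam i₀) :
    (∀ a a' : ℝ, -1 ≤ a' → a' < a → a ≤ 1 →
      SSCL ψ lam (AstarMat C a') < SSCL ψ lam (AstarMat C a)) ∧
    (∀ a ∈ Set.Icc (-1 : ℝ) 1, a ≠ -1 →
      SSCL ψ lam (AstarMat C (-1)) < SSCL ψ lam (AstarMat C a)) ∧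
    (∀ d : ℕ, 1 ≤ d → ∀ M : Matrix (Fin d) (Fin C) ℝ,
      (∀ j, ∑ r, (M r j) ^ 2 = 1) → Mᵀ * M = AstarMat C (-1) →
      ∀ i : Fin C, i ≠ i₀ → ∀ r : Fin d, M r i = - M r i₀) := by
  have hstrict := SSCL_AstarMat_strictMonoOn k C hk hC i₀ hi₀ lam hlt1 hminor hmaj hpos ψ Δ₂ hΔpos
    hΔ δone hδpos hδ hlam1
  refine ⟨fun a a' ha' haa ha => hstrict ⟨ha', by linarith⟩ ⟨by linarith, ha⟩ haa,
    fun a ha hne => hstrict ⟨le_rfl, by norm_num⟩ ha (lt_of_le_of_ne ha.1 (Ne.symm hne)), ?_⟩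
  intro d _ M hcol hMM i hi r
  have hgram : ∑ r, M r i * M r i₀ = -1 := by
    have := congrFun (congrFun hMM i₀) i
    rw [Matrix.mul_apply, AstarMat_apply_of_val_eq_zero hi₀ hi] at this
    simpa [mul_comm] using this
  exact congrFun (eq_neg_of_sum_sq_eq_one_of_sum_mul_eq_neg_one (hcol i) (hcol i₀) hgram) r

/-- minority collapse, SCL setting: under the stated hypotheses on `λ`, `ψ`,
`Δ₂`, `δ_𝟙` and the threshold condition on `λ₁`, the map `a ↦ S_SCL(A*(a))` is strictly
increasing on `[−1,1]`, hence minimized only at `a = −1`, and any unit-column `M` with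
`MᵀM = A*(−1)` exhibits minority collapse: `μᵢ = −μ₁` for all `i ≠ 1`. -/
theorem stmt18 (k C : ℕ) (hk : 1 ≤ k) (hC : 3 ≤ C)
    (i₀ : Fin C) (hi₀ : (i₀ : ℕ) = 0)
    (lam : Fin C → ℝ)
    (hlt1 : lam i₀ < 1)
    (hminor : ∀ i : Fin C, i ≠ i₀ → lam i = (1 - lam i₀) / ((C : ℝ) - 1))
    (hmaj : (1 - lam i₀) / ((C : ℝ) - 1) < lam i₀)
    (hpos : 0 < (1 - lam i₀) / ((C : ℝ) - 1))
    (ψ : (Fin k → ℝ) → ℝ)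
    (hconv : StrictConvexOn ℝ Set.univ ψ) (hmono : ArgwiseStrictMono ψ)
    (Δ₂ : ℝ) (hΔpos : 0 < Δ₂)
    (hΔ : ∀ v v' : Fin k → ℝ, (∀ i, v i ∈ Set.Icc (-2 : ℝ) 0) →
      (∀ i, v' i ∈ Set.Icc (-2 : ℝ) 0) →
      |ψ v - ψ v'| ≤ Δ₂ * Real.sqrt (∑ i, (v i - v' i) ^ 2))
    (δone : ℝ) (hδpos : 0 < δone)
    (hδ : ∀ t t' : ℝ, t ∈ Set.Icc (-2 : ℝ) 0 → t' ∈ Set.Icc (-2 : ℝ) 0 → t' ≤ t →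
      (t - t') * δone ≤ ψ (t • (fun _ : Fin k => (1 : ℝ)))
                        - ψ (t' • (fun _ : Fin k => (1 : ℝ))))
    (hlam1 : 1 / (1 + δone / ((2 * ((C : ℝ) - 1) / ((C : ℝ) - 2)) * Real.sqrt k * Δ₂))
              ≤ lam i₀) :
    (∀ a a' : ℝ, -1 ≤ a' → a' < a → a ≤ 1 →
      SSCL ψ lam (AstarMat C a') < SSCL ψ lam (AstarMat C a)) ∧
    (∀ a ∈ Set.Icc (-1 : ℝ) 1, a ≠ -1 →
      SSCL ψ lam (AstarMat C (-1)) < SSCL ψ lam (AstarMat C a)) ∧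
    (∀ d : ℕ, 1 ≤ d → ∀ M : Matrix (Fin d) (Fin C) ℝ,
      (∀ j, ∑ r, (M r j) ^ 2 = 1) → Mᵀ * M = AstarMat C (-1) →
      ∀ i : Fin C, i ≠ i₀ → ∀ r : Fin d, M r i = - M r i₀) :=
  stmt18_general k C hk hC i₀ hi₀ lam hlt1 hminor hmaj hpos ψ Δ₂ hΔpos hΔ δone hδpos hδ hlam1
end

section
/- Let k ≥ 1 and let ψ : ℝ^k → ℝ be the InfoNCE loss function ψ(t₁,…,t_k) = log(1 + (1/k)∑_{i=1}^k e^{t_i}). Then: (i) ψ is differentiable with ∂ψ/∂tᵢ(t) = e^{tᵢ}/(k + ∑_{j=1}^k e^{t_j}), and for every t ∈ [−2,0]^k the Euclidean norm of the gradient satisfies ‖∇ψ(t)‖₂ = √(∑_{i=1}^k e^{2tᵢ}) / (k + ∑_{i=1}^k e^{tᵢ}) ≤ 1/(2√k), with equality if and only if t = 0; hence sup_{t ∈ [−2,0]^k} ‖∇ψ(t)‖₂ = 1/(2√k) and ψ is Lipschitz on [−2,0]^k with constant 1/(2√k) with respect to the Euclidean norm. (ii) For every u ∈ {0,1}^k with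 m := ∑_{i=1}^k uᵢ, one has ⟨u, ∇ψ(−2u)⟩ = m/(2k e² − (e² − 1)m); in particular, for u = (1,…,1) this value equals 1/(1 + e²). -/
/-- The InfoNCE loss function `ψ(t₁,…,t_k) = log(1 + (1/k) ∑ᵢ e^{tᵢ})`. -/
noncomputable def psiInfoNCE (k : ℕ) (t : Fin k → ℝ) : ℝ :=
  Real.log (1 + (1 / (k : ℝ)) * ∑ i, Real.exp (t i))

/-!
For `k > 0`, `ψ(t) = log (k + S) - log k` with `S = ∑ᵢ e^{tᵢ}`, so `∇ψ(t)ᵢ = e^{tᵢ} / (k + S)` and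
`‖∇ψ(t)‖₂ = √(∑ᵢ e^{2tᵢ}) / (k + S)`. On the nonpositive orthant `e^{2tᵢ} ≤ e^{tᵢ}`, so this is at
most `√S / (k + S) ≤ 1 / (2√k)` by AM–GM `k + S ≥ 2√(kS)`, and equality in the first step forces
`t = 0`. The orthant is convex, so the gradient bound is a Lipschitz bound by the mean value
inequality. Part (ii) is arithmetic: for `uᵢ ∈ {0, 1}`, `e^{-2uᵢ} = 1 - uᵢ + uᵢ e^{-2}`.
-/

open Real Finset

lemma hasFDerivAt_sum_exp {ι : Type*} [Fintype ι] (t : ι → ℝ) :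
    HasFDerivAt (fun t : ι → ℝ => ∑ i, exp (t i))
      (∑ i, exp (t i) • (ContinuousLinearMap.proj i : (ι → ℝ) →L[ℝ] ℝ)) t :=
  HasFDerivAt.fun_sum fun i _ => (hasFDerivAt_apply i t).exp

lemma sum_smul_proj_comp_continuousLinearEquiv {ι : Type*} [Fintype ι] (g : ι → ℝ) :
    (∑ i, g i • (ContinuousLinearMap.proj i : (ι → ℝ) →L[ℝ] ℝ)).comp
        (PiLp.continuousLinearEquiv 2 ℝ (fun _ : ι => ℝ)).toContinuousLinearMap =
      innerSL ℝ (WithLp.toLp 2 g) := by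
  ext x
  simp [PiLp.inner_apply, mul_comm]

lemma sqrt_div_add_le_and_eq_iff {a b : ℝ} (ha : 0 < a) (hb : 0 ≤ b) :
    √b / (a + b) ≤ 1 / (2 * √a) ∧ (√b / (a + b) = 1 / (2 * √a) ↔ b = a) := by
  have hab : 0 < a + b := by positivity
  have hsq : a + b - 2 * √a * √b = (√a - √b) ^ 2 := by
    rw [sub_sq, sq_sqrt ha.le, sq_sqrt hb]; ring
  rw [div_le_div_iff₀ hab (by positivity), div_eq_div_iff hab.ne' (by positivity)]
  refine ⟨by nlinarith [sq_nonneg (√a - √b)], fun h => ?_, fun h => ?_⟩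
  · have h0 : (√a - √b) ^ 2 = 0 := by rw [← hsq]; linarith
    rw [← sqrt_inj hb ha.le]
    linarith [pow_eq_zero_iff two_ne_zero |>.mp h0]
  · subst h
    linear_combination 2 * mul_self_sqrt hb

lemma sum_exp_two_mul_le_sum_exp_and_eq_iff {ι : Type*} [Fintype ι] {t : ι → ℝ}
    (ht : ∀ i, t i ≤ 0) :
    ∑ i, exp (2 * t i) ≤ ∑ i, exp (t i) ∧ (∑ i, exp (2 * t i) = ∑ i, exp (t i) ↔ t = 0) := by
  have hle : ∀ i ∈ univ, exp (2 * t i) ≤ exp (t i) :=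
    fun i _ => exp_le_exp.mpr (by linarith [ht i])
  refine ⟨sum_le_sum hle, ?_⟩
  rw [sum_eq_sum_iff_of_le hle, funext_iff]
  simp only [mem_univ, true_implies, exp_eq_exp, Pi.zero_apply]
  exact forall_congr' fun i => by constructor <;> intro h <;> linarith

noncomputable def gradInfoNCE (k : ℕ) (t : Fin k → ℝ) : Fin k → ℝ :=
  fun i => exp (t i) / (k + ∑ j, exp (t j))

section InfoNCE

variable {k : ℕ}

lemma psiInfoNCE_eq_log_sub (hk : 0 < k) :
    psiInfoNCE k = fun t => log (k + ∑ i, exp (t i)) - log k := by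
  funext t
  have hk' : (k : ℝ) ≠ 0 := by positivity
  rw [psiInfoNCE, ← log_div (by positivity) hk']
  congr 1
  field_simp

theorem hasFDerivAt_psiInfoNCE (hk : 0 < k) (t : Fin k → ℝ) :
    HasFDerivAt (psiInfoNCE k)
      (∑ i, gradInfoNCE k t i • (ContinuousLinearMap.proj i : (Fin k → ℝ) →L[ℝ] ℝ)) t := by
  rw [psiInfoNCE_eq_log_sub hk]
  refine ((((hasFDerivAt_sum_exp t).const_add (k : ℝ)).log (by positivity)).sub_const
    (log k)).congr_fderiv ?_
  simp only [Finset.smul_sum, smul_smul, gradInfoNCE, div_eq_inv_mul]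

theorem hasDerivAt_psiInfoNCE_update (t : Fin k → ℝ) (i : Fin k) :
    HasDerivAt (fun s => psiInfoNCE k (Function.update t i s)) (gradInfoNCE k t i) (t i) := by
  have := (hasFDerivAt_psiInfoNCE i.pos (Function.update t i (t i))).comp_hasDerivAt (t i)
    (hasDerivAt_update t i (t i))
  simp only [Function.update_eq_self, _root_.sum_apply, smul_apply, ContinuousLinearMap.proj_apply,
    Pi.single_apply, smul_eq_mul, mul_ite, mul_one, mul_zero, sum_ite_eq', mem_univ, if_true] at this
  exact this

theorem hasFDerivAt_psiInfoNCE_ofLp (hk : 0 < k) (x : EuclideanSpace ℝ (Fin k)) :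
    HasFDerivAt (fun x : EuclideanSpace ℝ (Fin k) => psiInfoNCE k x.ofLp)
      (innerSL ℝ (WithLp.toLp 2 (gradInfoNCE k x.ofLp))) x := by
  rw [← sum_smul_proj_comp_continuousLinearEquiv]
  exact (hasFDerivAt_psiInfoNCE hk x.ofLp).comp x
    (PiLp.continuousLinearEquiv 2 ℝ (fun _ : Fin k => ℝ)).hasFDerivAt

lemma norm_toLp_gradInfoNCE (t : Fin k → ℝ) :
    ‖WithLp.toLp 2 (gradInfoNCE k t)‖ = √(∑ i, exp (2 * t i)) / (k + ∑ i, exp (t i)) := by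
  have hD : 0 ≤ (k : ℝ) + ∑ i, exp (t i) := by positivity
  rw [EuclideanSpace.norm_eq, ← sqrt_sq hD, ← sqrt_div' _ (sq_nonneg _), sum_div]
  congr 1
  refine sum_congr rfl fun i _ => ?_
  rw [norm_eq_abs, sq_abs, PiLp.toLp_apply, gradInfoNCE, div_pow, ← exp_nat_mul]
  push_cast; rfl

theorem norm_toLp_gradInfoNCE_le_and_eq_iff (hk : 0 < k) {t : Fin k → ℝ} (ht : ∀ i, t i ≤ 0) :
    ‖WithLp.toLp 2 (gradInfoNCE k t)‖ ≤ 1 / (2 * √k) ∧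
      (‖WithLp.toLp 2 (gradInfoNCE k t)‖ = 1 / (2 * √k) ↔ t = 0) := by
  obtain ⟨hS, hS_eq⟩ := sum_exp_two_mul_le_sum_exp_and_eq_iff ht
  obtain ⟨hAM, hAM_eq⟩ :=
    sqrt_div_add_le_and_eq_iff (Nat.cast_pos.mpr hk) (by positivity : 0 ≤ ∑ i, exp (t i))
  have hD : 0 < (k : ℝ) + ∑ i, exp (t i) := by positivity
  have hmono : √(∑ i, exp (2 * t i)) / (k + ∑ i, exp (t i)) ≤
      √(∑ i, exp (t i)) / (k + ∑ i, exp (t i)) :=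
    div_le_div_of_nonneg_right (sqrt_le_sqrt hS) hD.le
  rw [norm_toLp_gradInfoNCE]
  refine ⟨hmono.trans hAM, fun h => hS_eq.mp ?_, fun h0 => ?_⟩
  · have h1 := (div_left_inj' hD.ne').mp (le_antisymm hmono (hAM.trans h.ge))
    exact (sqrt_inj (by positivity) (by positivity)).mp h1
  · rw [hS_eq.mpr h0]
    exact hAM_eq.mpr (by simp [h0])

theorem abs_psiInfoNCE_sub_le (hk : 0 < k) {v v' : Fin k → ℝ} (hv : ∀ i, v i ≤ 0)
    (hv' : ∀ i, v' i ≤ 0) :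
    |psiInfoNCE k v - psiInfoNCE k v'| ≤ 1 / (2 * √k) * √(∑ i, (v i - v' i) ^ 2) := by
  set s : Set (EuclideanSpace ℝ (Fin k)) := {x | ∀ i, x i ≤ 0}
  have hs : Convex ℝ s := fun x hx y hy a b ha hb _ i => by
    simp only [PiLp.add_apply, PiLp.smul_apply, smul_eq_mul] at hx hy ⊢
    nlinarith [hx i, hy i]
  have := hs.norm_image_sub_le_of_norm_hasFDerivWithin_le
    (fun x _ => (hasFDerivAt_psiInfoNCE_ofLp hk x).hasFDerivWithinAt)
    (fun x hx => by
      rw [innerSL_apply_norm]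
      exact (norm_toLp_gradInfoNCE_le_and_eq_iff hk hx).1)
    (show WithLp.toLp 2 v' ∈ s from hv') (show WithLp.toLp 2 v ∈ s from hv)
  simpa only [norm_eq_abs, EuclideanSpace.norm_eq, WithLp.ofLp_sub, Pi.sub_apply, sq_abs] using this

theorem sum_mul_exp_neg_two_mul_div {u : Fin k → ℝ} (hu : ∀ i, u i = 0 ∨ u i = 1) :
    ∑ i, u i * (exp (-2 * u i) / (k + ∑ j, exp (-2 * u j))) =
      (∑ i, u i) / (2 * k * exp 1 ^ 2 - (exp 1 ^ 2 - 1) * ∑ i, u i) := by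
  have hexp : ∀ i, exp (-2 * u i) = 1 - u i + u i * exp (-2) := fun i => by
    rcases hu i with h | h <;> simp [h]
  have hmul : ∀ i, u i * exp (-2 * u i) = u i * exp (-2) := fun i => by
    rcases hu i with h | h <;> simp [h]
  have hsum : ∑ j, exp (-2 * u j) = k - ∑ i, u i + (∑ i, u i) * exp (-2) := by
    simp only [hexp, sum_add_distrib, sum_sub_distrib, ← sum_mul, sum_const, card_univ,
      Fintype.card_fin, nsmul_eq_mul, mul_one]
  have hE : exp (-2) * exp 1 ^ 2 = 1 := by
    rw [← exp_nat_mul, ← exp_add]; norm_num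
  simp only [mul_div_assoc', hmul, ← sum_div, ← sum_mul, hsum]
  rw [← mul_div_mul_right _ _ (pow_ne_zero 2 (exp_pos 1).ne')]
  congr 1 <;> linear_combination (∑ i, u i) * hE

end InfoNCE

/-- (i) InfoNCE `ψ` is differentiable with partial derivatives
`∂ψ/∂tᵢ(t) = e^{tᵢ}/(k + ∑ⱼ e^{tⱼ})`; on `[−2,0]^k` the Euclidean gradient-norm expression
`√(∑ e^{2tᵢ})/(k + ∑ e^{tᵢ})` is at most `1/(2√k)` with equality iff `t = 0`, so `ψ` is
`1/(2√k)`-Lipschitz on `[−2,0]^k` in the Euclidean norm. (ii) For `u ∈ {0,1}^k` with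
`m = ∑ uᵢ`, `⟨u, ∇ψ(−2u)⟩ = m/(2k e² − (e²−1)m)`; for `u = 𝟙` this equals `1/(1+e²)`. -/
theorem stmt19 (k : ℕ) (hk : 1 ≤ k) :
    Differentiable ℝ (psiInfoNCE k) ∧
    (∀ (t : Fin k → ℝ) (i : Fin k),
      HasDerivAt (fun s : ℝ => psiInfoNCE k (Function.update t i s))
        (Real.exp (t i) / ((k : ℝ) + ∑ j, Real.exp (t j))) (t i)) ∧
    (∀ t : Fin k → ℝ, (∀ i, t i ∈ Set.Icc (-2 : ℝ) 0) →
      Real.sqrt (∑ i, Real.exp (2 * t i)) / ((k : ℝ) + ∑ i, Real.exp (t i))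
          ≤ 1 / (2 * Real.sqrt k) ∧
      (Real.sqrt (∑ i, Real.exp (2 * t i)) / ((k : ℝ) + ∑ i, Real.exp (t i))
          = 1 / (2 * Real.sqrt k) ↔ t = 0)) ∧
    (∀ v v' : Fin k → ℝ, (∀ i, v i ∈ Set.Icc (-2 : ℝ) 0) →
      (∀ i, v' i ∈ Set.Icc (-2 : ℝ) 0) →
      |psiInfoNCE k v - psiInfoNCE k v'| ≤
        (1 / (2 * Real.sqrt k)) * Real.sqrt (∑ i, (v i - v' i) ^ 2)) ∧
    (∀ u : Fin k → ℝ, (∀ i, u i = 0 ∨ u i = 1) →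
      ∑ i, u i * (Real.exp (-2 * u i) / ((k : ℝ) + ∑ j, Real.exp (-2 * u j)))
        = (∑ i, u i) /
            (2 * (k : ℝ) * Real.exp 1 ^ 2 - (Real.exp 1 ^ 2 - 1) * ∑ i, u i)) ∧
    (∑ i : Fin k, (1 : ℝ) *
        (Real.exp (-2 * (1 : ℝ)) / ((k : ℝ) + ∑ _j : Fin k, Real.exp (-2 * (1 : ℝ))))
      = 1 / (1 + Real.exp 1 ^ 2)) := by
  refine ⟨fun t => (hasFDerivAt_psiInfoNCE hk t).differentiableAt, hasDerivAt_psiInfoNCE_update,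
    fun t ht => by
      simpa only [norm_toLp_gradInfoNCE] using
        norm_toLp_gradInfoNCE_le_and_eq_iff hk fun i => (ht i).2,
    fun v v' hv hv' => abs_psiInfoNCE_sub_le hk (fun i => (hv i).2) (fun i => (hv' i).2),
    fun u hu => sum_mul_exp_neg_two_mul_div hu,
    (sum_mul_exp_neg_two_mul_div (u := fun _ => 1) fun _ => Or.inr rfl).trans ?_⟩
  have hk0 : (k : ℝ) ≠ 0 := by positivity
  simp only [sum_const, card_univ, Fintype.card_fin, nsmul_eq_mul, mul_one]
  rw [show 2 * (k : ℝ) * exp 1 ^ 2 - (exp 1 ^ 2 - 1) * k = k * (1 + exp 1 ^ 2) by ring,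
    div_mul_cancel_left₀ hk0, one_div]
end
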